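/- arXiv:1503.00887 — 4 statements merged into one kernel-verified Lean document; each statement's English description precedes it below -/
import Mathlib

section
/- For every γ > 0 and every y ∈ H, the point p = Σ_i (1/(1 + γ·λ_i))·⟨y, φ_i⟩·φ_i is the unique minimizer over H of the function x ↦ f(x) + (1/(2γ))·‖x - y‖²; that is, prox_{γf}(y) = Σ_i (1/(1 + γ·λ_i))·⟨y, φ_i⟩·φ_i. -/
open RealInnerProductSpace

/-! Coordinatewise in the basis `φ`, the objective splits as `∑ i, g_i ⟪x, φ i⟫` with
`g_i c = λ_i/2 c² + (c - ⟪y, φ i⟫)²/(2γ)` (Parseval for `‖x - y‖²`). Completing the square, each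
`g_i` is a strictly convex parabola minimized exactly at `⟪y, φ i⟫/(1 + γλ_i)`, and these numbers
are the coordinates of `p` because `1/(1 + γλ_i) ∈ (0, 1]` keeps them square-summable. A point
minimizes the sum iff it minimizes every term. -/

noncomputable def proxObjective (l γ b c : ℝ) : ℝ :=
  l / 2 * c ^ 2 + 1 / (2 * γ) * (c - b) ^ 2

section ProxObjective

variable {l γ : ℝ}

lemma proxObjective_eq_add_sq (hγ : γ ≠ 0) (hl : 1 + γ * l ≠ 0) (b c : ℝ) :
    proxObjective l γ b c = proxObjective l γ b (1 / (1 + γ * l) * b) +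
      (1 + γ * l) / (2 * γ) * (c - 1 / (1 + γ * l) * b) ^ 2 := by
  have hl' : 1 + l * γ ≠ 0 := by rwa [mul_comm]
  unfold proxObjective
  field_simp
  ring

lemma proxObjective_le (hγ : 0 < γ) (hl : 0 < 1 + γ * l) (b c : ℝ) :
    proxObjective l γ b (1 / (1 + γ * l) * b) ≤ proxObjective l γ b c := by
  rw [proxObjective_eq_add_sq hγ.ne' hl.ne' b c]
  have : 0 ≤ (1 + γ * l) / (2 * γ) * (c - 1 / (1 + γ * l) * b) ^ 2 := by positivity
  linarith

lemma eq_of_proxObjective_le (hγ : 0 < γ) (hl : 0 < 1 + γ * l) {b c : ℝ}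
    (h : proxObjective l γ b c ≤ proxObjective l γ b (1 / (1 + γ * l) * b)) :
    c = 1 / (1 + γ * l) * b := by
  rw [proxObjective_eq_add_sq hγ.ne' hl.ne' b c] at h
  have hsq : (1 + γ * l) / (2 * γ) * (c - 1 / (1 + γ * l) * b) ^ 2 = 0 :=
    le_antisymm (by linarith) (by positivity)
  have hcoef : (1 + γ * l) / (2 * γ) ≠ 0 := by positivity
  simpa [hcoef, sub_eq_zero] using hsq

end ProxObjective

namespace HilbertBasis

variable {ι H : Type*} [NormedAddCommGroup H] [InnerProductSpace ℝ H] (φ : HilbertBasis ι ℝ H)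

lemma hasSum_inner_sq (x : H) : HasSum (fun i => ⟪x, φ i⟫ ^ 2) (‖x‖ ^ 2) := by
  have h := φ.hasSum_inner_mul_inner x x
  rw [real_inner_self_eq_norm_sq] at h
  simpa only [sq, real_inner_comm x] using h

lemma summable_mul_inner_sq {w : ι → ℝ} {C : ℝ} (hw : ∀ i, ‖w i‖ ≤ C) (x : H) :
    Summable fun i => w i * ⟪x, φ i⟫ ^ 2 :=
  ((φ.hasSum_inner_sq x).summable.mul_left C).of_norm_bounded fun i => by
    rw [norm_mul, Real.norm_of_nonneg (sq_nonneg _)]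
    exact mul_le_mul_of_nonneg_right (hw i) (sq_nonneg _)

lemma hasSum_mul_inner_sq_add_mul_sub_sq {w : ι → ℝ} {C : ℝ} (hw : ∀ i, ‖w i‖ ≤ C)
    (a : ℝ) (x y : H) :
    HasSum (fun i => w i * ⟪x, φ i⟫ ^ 2 + a * (⟪x, φ i⟫ - ⟪y, φ i⟫) ^ 2)
      ((∑' i, w i * ⟪x, φ i⟫ ^ 2) + a * ‖x - y‖ ^ 2) := by
  refine (φ.summable_mul_inner_sq hw x).hasSum.add ?_
  simpa only [inner_sub_left] using (φ.hasSum_inner_sq (x - y)).mul_left a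

lemma eq_of_forall_inner_eq {p q : H} (h : ∀ i, ⟪q, φ i⟫ = ⟪p, φ i⟫) : q = p := by
  refine φ.repr.injective (lp.ext (funext fun i => ?_))
  rw [φ.repr_apply_apply, φ.repr_apply_apply, real_inner_comm, h, real_inner_comm]

lemma inner_tsum_smul_inner_smul {m : ι → ℝ} {C : ℝ} (hm : ∀ i, ‖m i‖ ≤ C) (y : H) (j : ι) :
    ⟪∑' i, m i • ⟪y, φ i⟫ • φ i, φ j⟫ = m j * ⟪y, φ j⟫ := by
  have hmem : Memℓp (fun i => m i * ⟪y, φ i⟫) 2 :=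
    ((lp.memℓp (φ.repr y)).norm.const_mul C).mono fun i => by
      rw [norm_mul, φ.repr_apply_apply, real_inner_comm]
      exact mul_le_mul_of_nonneg_right (hm i) (norm_nonneg _)
  let v : lp (fun _ : ι => ℝ) 2 := ⟨_, hmem⟩
  have hsum : HasSum (fun i => m i • ⟪y, φ i⟫ • φ i) (φ.repr.symm v) := by
    simpa only [smul_smul] using φ.hasSum_repr_symm v
  rw [hsum.tsum_eq, real_inner_comm, ← φ.repr_apply_apply, LinearIsometryEquiv.apply_symm_apply]

lemma eq_of_tsum_le {g : ι → ℝ → ℝ} {p q : H}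
    (hp : Summable fun i => g i ⟪p, φ i⟫) (hq : Summable fun i => g i ⟪q, φ i⟫)
    (hmin : ∀ i c, g i ⟪p, φ i⟫ ≤ g i c)
    (huniq : ∀ i c, g i c ≤ g i ⟪p, φ i⟫ → c = ⟪p, φ i⟫)
    (h : ∑' i, g i ⟪q, φ i⟫ ≤ ∑' i, g i ⟪p, φ i⟫) : q = p := by
  refine φ.eq_of_forall_inner_eq fun i => huniq i _ (not_lt.mp fun hlt => h.not_gt ?_)
  exact hp.tsum_lt_tsum (fun j => hmin j _) hlt hq

end HilbertBasis

theorem prox_formula_general {H : Type*} [NormedAddCommGroup H] [InnerProductSpace ℝ H]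
    {ι : Type*} (φ : HilbertBasis ι ℝ H)
    (σ β : ℝ) (hσ : 0 < σ) (lam : ι → ℝ)
    (hlam : ∀ i, σ ≤ lam i ∧ lam i ≤ β) (γ : ℝ) (hγ : 0 < γ) (y : H) :
    (∀ x : H,
      (∑' i, lam i / 2 * ⟪(∑' i, (1 / (1 + γ * lam i)) • (⟪y, φ i⟫ : ℝ) • φ i), φ i⟫ ^ 2) +
          1 / (2 * γ) * ‖(∑' i, (1 / (1 + γ * lam i)) • (⟪y, φ i⟫ : ℝ) • φ i) - y‖ ^ 2 ≤
        (∑' i, lam i / 2 * ⟪x, φ i⟫ ^ 2) + 1 / (2 * γ) * ‖x - y‖ ^ 2) ∧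
    (∀ q : H,
      (∀ x : H,
        (∑' i, lam i / 2 * ⟪q, φ i⟫ ^ 2) + 1 / (2 * γ) * ‖q - y‖ ^ 2 ≤
          (∑' i, lam i / 2 * ⟪x, φ i⟫ ^ 2) + 1 / (2 * γ) * ‖x - y‖ ^ 2) →
      q = ∑' i, (1 / (1 + γ * lam i)) • (⟪y, φ i⟫ : ℝ) • φ i) := by
  have hlam_pos (i : ι) : 0 < lam i := hσ.trans_le (hlam i).1
  have hden (i : ι) : 0 < 1 + γ * lam i := by have := hlam_pos i; positivity
  have hmul_le (i : ι) : ‖1 / (1 + γ * lam i)‖ ≤ 1 := by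
    rw [Real.norm_of_nonneg (by have := hden i; positivity), div_le_one (hden i)]
    exact le_add_of_nonneg_right (mul_pos hγ (hlam_pos i)).le
  have hweight_le (i : ι) : ‖lam i / 2‖ ≤ β / 2 := by
    rw [Real.norm_of_nonneg (by linarith [hlam_pos i])]
    linarith [(hlam i).2]
  set p := ∑' i, (1 / (1 + γ * lam i)) • (⟪y, φ i⟫ : ℝ) • φ i
  have hp (i : ι) : ⟪p, φ i⟫ = 1 / (1 + γ * lam i) * ⟪y, φ i⟫ :=
    φ.inner_tsum_smul_inner_smul hmul_le y i
  have hobj (x : H) : HasSum (fun i => proxObjective (lam i) γ ⟪y, φ i⟫ ⟪x, φ i⟫)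
      ((∑' i, lam i / 2 * ⟪x, φ i⟫ ^ 2) + 1 / (2 * γ) * ‖x - y‖ ^ 2) :=
    φ.hasSum_mul_inner_sq_add_mul_sub_sq hweight_le _ x y
  have hmin (i : ι) (c : ℝ) :
      proxObjective (lam i) γ ⟪y, φ i⟫ ⟪p, φ i⟫ ≤ proxObjective (lam i) γ ⟪y, φ i⟫ c :=
    hp i ▸ proxObjective_le hγ (hden i) _ c
  refine ⟨fun x => ?_, fun q hq => ?_⟩
  · rw [← (hobj p).tsum_eq, ← (hobj x).tsum_eq]
    exact (hobj p).summable.tsum_le_tsum (fun i => hmin i _) (hobj x).summable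
  · refine φ.eq_of_tsum_le (hobj p).summable (hobj q).summable hmin (fun i c hc => ?_) ?_
    · rw [hp i] at hc ⊢
      exact eq_of_proxObjective_le hγ (hden i) hc
    · rw [(hobj p).tsum_eq, (hobj q).tsum_eq]
      exact hq p

/-- For every `γ > 0` and `y ∈ H`, the point `p = Σ_i (1/(1+γλ i)) • ⟪y, φ i⟫ • φ i` is the
unique minimizer over `H` of `x ↦ f x + (1/(2γ)) ‖x - y‖²`, where
`f x = Σ_i (λ i / 2) ⟪x, φ i⟫²`; i.e. `prox_{γf}(y) = p`. -/
theorem prox_formula {H : Type*} [NormedAddCommGroup H] [InnerProductSpace ℝ H]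
    [CompleteSpace H] {ι : Type*} (φ : HilbertBasis ι ℝ H)
    (σ β : ℝ) (hσ : 0 < σ) (hσβ : σ ≤ β) (lam : ι → ℝ)
    (hlam : ∀ i, σ ≤ lam i ∧ lam i ≤ β) (γ : ℝ) (hγ : 0 < γ) (y : H) :
    (∀ x : H,
      (∑' i, lam i / 2 * ⟪(∑' i, (1 / (1 + γ * lam i)) • (⟪y, φ i⟫ : ℝ) • φ i), φ i⟫ ^ 2) +
          1 / (2 * γ) * ‖(∑' i, (1 / (1 + γ * lam i)) • (⟪y, φ i⟫ : ℝ) • φ i) - y‖ ^ 2 ≤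
        (∑' i, lam i / 2 * ⟪x, φ i⟫ ^ 2) + 1 / (2 * γ) * ‖x - y‖ ^ 2) ∧
    (∀ q : H,
      (∀ x : H,
        (∑' i, lam i / 2 * ⟪q, φ i⟫ ^ 2) + 1 / (2 * γ) * ‖q - y‖ ^ 2 ≤
          (∑' i, lam i / 2 * ⟪x, φ i⟫ ^ 2) + 1 / (2 * γ) * ‖x - y‖ ^ 2) →
      q = ∑' i, (1 / (1 + γ * lam i)) • (⟪y, φ i⟫ : ℝ) • φ i) :=
  prox_formula_general φ σ β hσ lam hlam γ hγ y
end

section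
/- For all real numbers σ, β, γ, α with 0 < σ ≤ β, γ ≥ 1/√(σβ), and 1 ≤ α < 2/(1 + max((1-γσ)/(1+γσ), (γβ-1)/(1+γβ))), the following hold: |1 - α + α·(1 - γσ)/(1 + γσ)| ≤ α - 1 + α·(γβ - 1)/(1 + γβ), and α - 1 + α·(γβ - 1)/(1 + γβ) = |1 - α| + α·max((1 - γσ)/(1 + γσ), (γβ - 1)/(1 + γβ)). -/
/-! With `p = γσ` and `q = γβ`, the hypothesis on `γ` says `pq ≥ 1`, which gives
`(1 - p)/(1 + p) ≤ (q - 1)/(1 + q)`, while `p ≤ q` and the monotonicity of `x ↦ (x - 1)/(x + 1)`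
give `(p - 1)/(1 + p) ≤ (q - 1)/(1 + q)`. So the σ-factor is dominated in absolute value by the
β-factor, and the triangle inequality together with `|1 - α| = α - 1` yields both claims. -/

lemma one_le_sq_mul_of_one_div_sqrt_le {x γ : ℝ} (hx : 0 < x) (h : 1 / Real.sqrt x ≤ γ) :
    1 ≤ γ ^ 2 * x := by
  have hγx : 1 ≤ γ * Real.sqrt x := (div_le_iff₀ (Real.sqrt_pos.2 hx)).1 h
  calc 1 ≤ (γ * Real.sqrt x) ^ 2 := one_le_pow₀ hγx
    _ = γ ^ 2 * x := by rw [mul_pow, Real.sq_sqrt hx.le]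

lemma abs_one_sub_div_one_add_le {p q : ℝ} (hp : 0 ≤ p) (hpq : p ≤ q) (h : 1 ≤ p * q) :
    |(1 - p) / (1 + p)| ≤ (q - 1) / (1 + q) := by
  have hp1 : 0 < 1 + p := by linarith
  have hq1 : 0 < 1 + q := by linarith
  rw [abs_le, neg_le, ← neg_div, neg_sub, div_le_div_iff₀ hp1 hq1, div_le_div_iff₀ hp1 hq1]
  constructor <;> nlinarith

lemma abs_one_sub_add_mul_le {α a b : ℝ} (hα : 1 ≤ α) (hab : |a| ≤ b) :
    |1 - α + α * a| ≤ α - 1 + α * b :=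
  calc |1 - α + α * a| ≤ |1 - α| + |α * a| := abs_add_le _ _
    _ = α - 1 + α * |a| := by
      rw [abs_mul, abs_of_nonpos (sub_nonpos.2 hα), abs_of_pos (zero_lt_one.trans_le hα), neg_sub]
    _ ≤ α - 1 + α * b := by gcongr

theorem rate_case_iii_general (σ β γ α : ℝ) (hσ : 0 < σ) (hσβ : σ ≤ β)
    (hγ : 1 / Real.sqrt (σ * β) ≤ γ) (hα₁ : 1 ≤ α) :
    |1 - α + α * ((1 - γ * σ) / (1 + γ * σ))| ≤
      α - 1 + α * ((γ * β - 1) / (1 + γ * β)) ∧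
    α - 1 + α * ((γ * β - 1) / (1 + γ * β)) =
      |1 - α| + α * max ((1 - γ * σ) / (1 + γ * σ)) ((γ * β - 1) / (1 + γ * β)) := by
  have hσβ₀ : 0 < σ * β := mul_pos hσ (hσ.trans_le hσβ)
  have hγ₀ : 0 < γ := lt_of_lt_of_le (by positivity) hγ
  have hpq : 1 ≤ γ * σ * (γ * β) := by
    have := one_le_sq_mul_of_one_div_sqrt_le hσβ₀ hγ
    linarith
  have hfactor := abs_one_sub_div_one_add_le (by positivity) (by gcongr) hpq
  refine ⟨abs_one_sub_add_mul_le hα₁ hfactor, ?_⟩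
  rw [max_eq_right ((le_abs_self _).trans hfactor), abs_of_nonpos (sub_nonpos.2 hα₁)]
  ring

/-- Case (iii): for `0 < σ ≤ β`, `γ ≥ 1/√(σβ)` and
`1 ≤ α < 2/(1 + max((1-γσ)/(1+γσ), (γβ-1)/(1+γβ)))`,
`|1 - α + α(1-γσ)/(1+γσ)| ≤ α - 1 + α(γβ-1)/(1+γβ)`, and the latter equals the rate bound
`|1-α| + α·max((1-γσ)/(1+γσ), (γβ-1)/(1+γβ))`. -/
theorem rate_case_iii (σ β γ α : ℝ) (hσ : 0 < σ) (hσβ : σ ≤ β)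
    (hγ : 1 / Real.sqrt (σ * β) ≤ γ) (hα₁ : 1 ≤ α)
    (hα₂ : α < 2 / (1 + max ((1 - γ * σ) / (1 + γ * σ)) ((γ * β - 1) / (1 + γ * β)))) :
    |1 - α + α * ((1 - γ * σ) / (1 + γ * σ))| ≤
      α - 1 + α * ((γ * β - 1) / (1 + γ * β)) ∧
    α - 1 + α * ((γ * β - 1) / (1 + γ * β)) =
      |1 - α| + α * max ((1 - γ * σ) / (1 + γ * σ)) ((γ * β - 1) / (1 + γ * β)) :=
  rate_case_iii_general σ β γ α hσ hσβ hγ hα₁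
end

section
/- Let γ ∈ (0, 1/√(σβ)] and α ∈ (0, 1], and let P : H → H satisfy, for every y ∈ H, that P(y) minimizes x ↦ f(x) + (1/(2γ))·‖x - y‖². Define T(z) = (1 - α)·z + α·(2·P(z) - z). Then for every index j with λ_j = σ and every k ≥ 0, ‖T^[k](φ_j)‖ = ρ^k·‖φ_j‖, where ρ = |1 - α| + α·max((1 - γσ)/(1 + γσ), (γβ - 1)/(1 + γβ)). Hence the generalized Douglas-Rachford algorithm applied to minimize f + g with g ≡ 0 converges exactly with rate ρ, so the linear rate bound ρ is tight in this parameter regime. -/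
open RealInnerProductSpace

/-!
On `y = c • φ j` the prox objective of `f` decouples the `j`-th coordinate, and completing the
square there shows that `prox_{γf} (c • φ j) = (c / (1 + γσ)) • φ j` when `λ j = σ`. Hence the
Douglas-Rachford map multiplies `φ j` by `r = 1 - α + α (1 - γσ) / (1 + γσ)`. The condition
`γ²σβ ≤ 1` is exactly what makes `(1 - γσ) / (1 + γσ)` the larger entry of the max, and it also
gives `γσ ≤ 1`, so `r ≥ 0` and `r` is the claimed rate.
-/

section

variable {ι H : Type*} [NormedAddCommGroup H] [InnerProductSpace ℝ H]

/-- The paper's `f`, in the coordinates of an orthonormal family `v`. -/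
noncomputable def diagQuad (v : ι → H) (lam : ι → ℝ) (x : H) : ℝ :=
  ∑' i, lam i / 2 * ⟪x, v i⟫ ^ 2

/-- `p` is a minimizer of the prox objective, i.e. `p = prox_{γ f} y`. -/
def IsProx (f : H → ℝ) (γ : ℝ) (y p : H) : Prop :=
  ∀ x, f p + 1 / (2 * γ) * ‖p - y‖ ^ 2 ≤ f x + 1 / (2 * γ) * ‖x - y‖ ^ 2

theorem diagQuad_nonneg {v : ι → H} {lam : ι → ℝ} (hlam : ∀ i, 0 ≤ lam i) (x : H) :
    0 ≤ diagQuad v lam x :=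
  tsum_nonneg fun i => mul_nonneg (div_nonneg (hlam i) zero_le_two) (sq_nonneg _)

namespace Orthonormal

variable {v : ι → H} {lam : ι → ℝ} {C : ℝ}

theorem summable_inner_sq (hv : Orthonormal ℝ v) (x : H) : Summable fun i => ⟪x, v i⟫ ^ 2 :=
  (hv.inner_products_summable x).congr fun i => by rw [Real.norm_eq_abs, sq_abs, real_inner_comm]

theorem summable_diagQuad (hv : Orthonormal ℝ v) (hC : ∀ i, |lam i| ≤ C) (x : H) :
    Summable fun i => lam i / 2 * ⟪x, v i⟫ ^ 2 := by
  refine ((hv.summable_inner_sq x).mul_left (C / 2)).of_norm_bounded fun i => ?_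
  rw [norm_mul, norm_div, Real.norm_eq_abs, Real.norm_two, Real.norm_of_nonneg (sq_nonneg _)]
  gcongr
  exact hC i

theorem diagQuad_add_smul (hv : Orthonormal ℝ v) (hC : ∀ i, |lam i| ≤ C) (x : H) (j : ι)
    (s : ℝ) :
    diagQuad v lam (x + s • v j) =
      diagQuad v lam x + lam j / 2 * ((⟪x, v j⟫ + s) ^ 2 - ⟪x, v j⟫ ^ 2) := by
  classical
  rw [← sub_eq_iff_eq_add', diagQuad, diagQuad,
    ← (hv.summable_diagQuad hC _).tsum_sub (hv.summable_diagQuad hC _),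
    ← tsum_ite_eq j fun _ => lam j / 2 * ((⟪x, v j⟫ + s) ^ 2 - ⟪x, v j⟫ ^ 2)]
  refine tsum_congr fun i => ?_
  rw [inner_add_left, real_inner_smul_left, orthonormal_iff_ite.mp hv j i]
  obtain rfl | hij := eq_or_ne i j
  · simp only [if_true]
    ring
  · rw [if_neg hij, if_neg hij.symm]
    ring

theorem diagQuad_smul (hv : Orthonormal ℝ v) (hC : ∀ i, |lam i| ≤ C) (j : ι) (s : ℝ) :
    diagQuad v lam (s • v j) = lam j / 2 * s ^ 2 := by
  simpa [diagQuad] using hv.diagQuad_add_smul hC 0 j s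

/-- Strong convexity of the prox objective at its minimizer `s • v j`: the terms linear in
`⟪x - s • v j, v j⟫` cancel exactly because `s (1 + γ λⱼ) = c`. -/
theorem diagQuad_prox_smul_le (hv : Orthonormal ℝ v) (hlam : ∀ i, 0 ≤ lam i)
    (hC : ∀ i, lam i ≤ C) {γ : ℝ} (hγ : 0 < γ) (j : ι) {c s : ℝ}
    (hs : s * (1 + γ * lam j) = c) (x : H) :
    diagQuad v lam (s • v j) + 1 / (2 * γ) * ‖s • v j - c • v j‖ ^ 2 +
        1 / (2 * γ) * ‖x - s • v j‖ ^ 2 ≤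
      diagQuad v lam x + 1 / (2 * γ) * ‖x - c • v j‖ ^ 2 := by
  have hC' : ∀ i, |lam i| ≤ C := fun i => (abs_of_nonneg (hlam i)).trans_le (hC i)
  obtain ⟨u, rfl⟩ : ∃ u, x = u + s • v j := ⟨x - s • v j, by abel⟩
  have hu : u + s • v j - c • v j = u + (s - c) • v j := by rw [sub_smul]; abel
  rw [add_sub_cancel_right, hu, ← sub_smul, norm_add_sq_real, real_inner_smul_right,
    norm_smul, hv.1 j, hv.diagQuad_add_smul hC', hv.diagQuad_smul hC', ← hs]
  have hlin : 1 / (2 * γ) * (2 * ((s - s * (1 + γ * lam j)) * ⟪u, v j⟫)) =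
      -(lam j * s * ⟪u, v j⟫) := by
    field_simp
    ring
  linarith [diagQuad_nonneg (v := v) hlam u]

theorem eq_div_smul_of_isProx_diagQuad (hv : Orthonormal ℝ v) (hlam : ∀ i, 0 ≤ lam i)
    (hC : ∀ i, lam i ≤ C) {γ : ℝ} (hγ : 0 < γ) (j : ι) {c : ℝ} {p : H}
    (hp : IsProx (diagQuad v lam) γ (c • v j) p) :
    p = (c / (1 + γ * lam j)) • v j := by
  set s := c / (1 + γ * lam j)
  have hs : s * (1 + γ * lam j) = c := div_mul_cancel₀ _ (by nlinarith [hlam j])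
  have hle : 1 / (2 * γ) * ‖p - s • v j‖ ^ 2 ≤ 0 := by
    linarith [hp (s • v j), hv.diagQuad_prox_smul_le hlam hC hγ j hs p]
  have hsq : ‖p - s • v j‖ ^ 2 ≤ 0 := nonpos_of_mul_nonpos_right hle (by positivity)
  rw [← sub_eq_zero, ← norm_eq_zero]
  exact pow_eq_zero_iff two_ne_zero |>.1 (hsq.antisymm (sq_nonneg _))

end Orthonormal

end

theorem iterate_apply_eq_pow_smul {R M : Type*} [Monoid R] [MulAction R M] {T : M → M}
    {v : M} {r : R} (hT : ∀ c : R, T (c • v) = (r * c) • v) (k : ℕ) :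
    T^[k] v = r ^ k • v := by
  induction k with
  | zero => simp
  | succ k ih => rw [Function.iterate_succ_apply', ih, hT, pow_succ']

theorem sq_mul_le_one_of_le_one_div_sqrt {γ a : ℝ} (hγ : 0 < γ) (ha : 0 < a)
    (h : γ ≤ 1 / Real.sqrt a) : γ ^ 2 * a ≤ 1 := by
  have h' : γ * Real.sqrt a ≤ 1 := by rwa [le_div_iff₀ (Real.sqrt_pos.2 ha)] at h
  calc γ ^ 2 * a = (γ * Real.sqrt a) ^ 2 := by rw [mul_pow, Real.sq_sqrt ha.le]
    _ ≤ 1 := pow_le_one₀ (by positivity) h'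

theorem max_rate_eq_left {a b : ℝ} (ha : 0 ≤ a) (hb : 0 ≤ b) (hab : a * b ≤ 1) :
    max ((1 - a) / (1 + a)) ((b - 1) / (1 + b)) = (1 - a) / (1 + a) := by
  rw [max_eq_left]
  rw [div_le_div_iff₀ (by linarith) (by linarith)]
  nlinarith

theorem DR_rate_tight_case_ii_general {H : Type*} [NormedAddCommGroup H] [InnerProductSpace ℝ H]
    {ι : Type*} (φ : HilbertBasis ι ℝ H)
    (σ β : ℝ) (hσ : 0 < σ) (hσβ : σ ≤ β) (lam : ι → ℝ)
    (hlam : ∀ i, lam i = σ ∨ lam i = β)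
    (γ α : ℝ) (hγ₀ : 0 < γ) (hγ₁ : γ ≤ 1 / Real.sqrt (σ * β))
    (hα₀ : 0 < α) (hα₁ : α ≤ 1)
    (P : H → H)
    (hP : ∀ y x : H,
      (∑' i, lam i / 2 * ⟪P y, φ i⟫ ^ 2) + 1 / (2 * γ) * ‖P y - y‖ ^ 2 ≤
        (∑' i, lam i / 2 * ⟪x, φ i⟫ ^ 2) + 1 / (2 * γ) * ‖x - y‖ ^ 2)
    (T : H → H)
    (hT : ∀ z : H, T z = (1 - α) • z + α • ((2 : ℝ) • P z - z)) :
    ∀ j : ι, lam j = σ → ∀ k : ℕ,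
      ‖T^[k] (φ j)‖ =
        (|1 - α| +
          α * max ((1 - γ * σ) / (1 + γ * σ)) ((γ * β - 1) / (1 + γ * β))) ^ k * ‖φ j‖ := by
  intro j hj k
  have hβ : 0 < β := hσ.trans_le hσβ
  have hlam₀ : ∀ i, 0 ≤ lam i := fun i => by rcases hlam i with h | h <;> linarith
  have hlamβ : ∀ i, lam i ≤ β := fun i => by rcases hlam i with h | h <;> linarith
  have hγσβ : γ * σ * (γ * β) ≤ 1 := by
    linarith [sq_mul_le_one_of_le_one_div_sqrt hγ₀ (by positivity) hγ₁]
  have hγσ : γ * σ ≤ 1 := by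
    have : γ * σ * (γ * σ) ≤ γ * σ * (γ * β) := by gcongr
    nlinarith
  set r := 1 - α + α * ((1 - γ * σ) / (1 + γ * σ))
  have hr₀ : 0 ≤ r :=
    add_nonneg (sub_nonneg.2 hα₁) (mul_nonneg hα₀.le (div_nonneg (by linarith) (by positivity)))
  have hρ : |1 - α| + α * max ((1 - γ * σ) / (1 + γ * σ)) ((γ * β - 1) / (1 + γ * β)) = r := by
    rw [max_rate_eq_left (by positivity) (by positivity) hγσβ, abs_of_nonneg (by linarith)]
  have hPj : ∀ c : ℝ, P (c • φ j) = (c / (1 + γ * σ)) • φ j := fun c =>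
    hj ▸ φ.orthonormal.eq_div_smul_of_isProx_diagQuad hlam₀ hlamβ hγ₀ j (hP _)
  have hTj : ∀ c : ℝ, T (c • φ j) = (r * c) • φ j := fun c => by
    simp only [hT, hPj, smul_smul, ← sub_smul, ← add_smul]
    congr 1
    simp only [r]
    field_simp
    ring
  rw [hρ, iterate_apply_eq_pow_smul hTj, norm_smul, Real.norm_of_nonneg (pow_nonneg hr₀ k)]

/-- Tightness of the Douglas-Rachford rate, case `γ ∈ (0, 1/√(σβ)]`, `α ∈ (0,1]`:
with `f(x) = Σ_i (λ i / 2) ⟪x, φ i⟫²` (each `λ i ∈ {σ, β}`, both values attained),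
if `P y` minimizes `x ↦ f x + (1/(2γ)) ‖x - y‖²` and
`T z = (1-α) • z + α • (2 • P z - z)`, then for every `j` with `λ j = σ` and every `k`,
`‖T^[k] (φ j)‖ = ρ^k ‖φ j‖` where
`ρ = |1-α| + α·max((1-γσ)/(1+γσ), (γβ-1)/(1+γβ))`, so the rate bound `ρ` is tight. -/
theorem DR_rate_tight_case_ii {H : Type*} [NormedAddCommGroup H] [InnerProductSpace ℝ H]
    [CompleteSpace H] {ι : Type*} (φ : HilbertBasis ι ℝ H)
    (σ β : ℝ) (hσ : 0 < σ) (hσβ : σ ≤ β) (lam : ι → ℝ)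
    (hlam : ∀ i, lam i = σ ∨ lam i = β)
    (hIσ : ∃ i, lam i = σ) (hIβ : ∃ i, lam i = β)
    (γ α : ℝ) (hγ₀ : 0 < γ) (hγ₁ : γ ≤ 1 / Real.sqrt (σ * β))
    (hα₀ : 0 < α) (hα₁ : α ≤ 1)
    (P : H → H)
    (hP : ∀ y x : H,
      (∑' i, lam i / 2 * ⟪P y, φ i⟫ ^ 2) + 1 / (2 * γ) * ‖P y - y‖ ^ 2 ≤
        (∑' i, lam i / 2 * ⟪x, φ i⟫ ^ 2) + 1 / (2 * γ) * ‖x - y‖ ^ 2)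
    (T : H → H)
    (hT : ∀ z : H, T z = (1 - α) • z + α • ((2 : ℝ) • P z - z)) :
    ∀ j : ι, lam j = σ → ∀ k : ℕ,
      ‖T^[k] (φ j)‖ =
        (|1 - α| +
          α * max ((1 - γ * σ) / (1 + γ * σ)) ((γ * β - 1) / (1 + γ * β))) ^ k * ‖φ j‖ :=
  DR_rate_tight_case_ii_general φ σ β hσ hσβ lam hlam γ α hγ₀ hγ₁ hα₀ hα₁ P hP T hT
end

section
/- Let H and K be real Hilbert spaces, let f : H → ℝ be Fréchet differentiable with gradient ∇f and satisfy, for all x, y ∈ H, f(x) ≥ f(y) + ⟨∇f(y), x - y⟩ + (σ/2)·‖x - y‖² and f(x) ≤ f(y) + ⟨∇f(y), x - y⟩ + (β/2)·‖x - y‖² with 0 < σ ≤ β, and let A : H →L K be a bounded linear operator with adjoint A* satisfying ‖A*(μ)‖ ≥ θ·‖μ‖ for all μ ∈ K, for some θ > 0. Then for every μ ∈ K the function x ↦ ⟨-A*(μ), x⟩ - f(x) attains its supremum at a unique point x_μ ∈ H, and the function d(μ) := ⟨-A*(μ), x_μ⟩ - f(x_μ) is (θ²/β)-strongly convex in the sense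 that for all μ, η ∈ K: d(η) ≥ d(μ) + ⟨-A(x_μ), η - μ⟩ + (θ²/(2β))·‖η - μ‖². -/
/-!
The gradient of a σ-strongly convex, β-smooth function is σ-strongly monotone and
β⁻¹-cocoercive, so `x ↦ x - β⁻¹ • (f' x - c)` is a contraction and `f'` is onto; the maximiser
`x_μ` of `⟪c, ·⟫ - f` is the unique solution of `f' x = c` with `c = -A† μ`.
Stepping from `x_μ` to `x_μ + β⁻¹ • (c' - c)` and using smoothness shows that the value of the
problem at `c'` exceeds its linearisation at `c` by at least `‖c' - c‖² / (2β)`; finally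
`‖A† (η - μ)‖ ≥ θ ‖η - μ‖`.
-/

open RealInnerProductSpace

section StronglyConvexSmooth

variable {H : Type*} [NormedAddCommGroup H] [InnerProductSpace ℝ H]
  {f : H → ℝ} {f' : H → H} {σ β : ℝ}

theorem inner_sub_add_sq_le_of_eq_grad
    (hstrong : ∀ x y : H, f x ≥ f y + ⟪f' y, x - y⟫ + σ / 2 * ‖x - y‖ ^ 2)
    {c x₀ : H} (hx₀ : f' x₀ = c) (x : H) :
    ⟪c, x⟫ - f x + σ / 2 * ‖x - x₀‖ ^ 2 ≤ ⟪c, x₀⟫ - f x₀ := by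
  have h := hstrong x x₀
  rw [hx₀, inner_sub_right] at h
  linarith

theorem inner_sub_le_of_eq_grad (hσ : 0 ≤ σ)
    (hstrong : ∀ x y : H, f x ≥ f y + ⟪f' y, x - y⟫ + σ / 2 * ‖x - y‖ ^ 2)
    {c x₀ : H} (hx₀ : f' x₀ = c) (x : H) : ⟪c, x⟫ - f x ≤ ⟪c, x₀⟫ - f x₀ := by
  have h := inner_sub_add_sq_le_of_eq_grad hstrong hx₀ x
  have : 0 ≤ σ / 2 * ‖x - x₀‖ ^ 2 := by positivity
  linarith

theorem strongly_monotone_of_strongly_convex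
    (hstrong : ∀ x y : H, f x ≥ f y + ⟪f' y, x - y⟫ + σ / 2 * ‖x - y‖ ^ 2) (x y : H) :
    σ * ‖x - y‖ ^ 2 ≤ ⟪f' x - f' y, x - y⟫ := by
  have hx := inner_sub_add_sq_le_of_eq_grad hstrong (rfl : f' x = f' x) y
  have hy := inner_sub_add_sq_le_of_eq_grad hstrong (rfl : f' y = f' y) x
  rw [norm_sub_rev] at hx
  rw [inner_sub_left, inner_sub_right, inner_sub_right]
  linarith

theorem inner_sub_add_sq_div_le_of_smooth
    (hsmooth : ∀ x y : H, f x ≤ f y + ⟪f' y, x - y⟫ + β / 2 * ‖x - y‖ ^ 2) (c x : H) :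
    ⟪c, x⟫ - f x + ‖c - f' x‖ ^ 2 / (2 * β) ≤
      ⟪c, x + β⁻¹ • (c - f' x)⟫ - f (x + β⁻¹ • (c - f' x)) := by
  set v := c - f' x
  have h := hsmooth (x + β⁻¹ • v) x
  have hinner : ⟪c, v⟫ - ⟪f' x, v⟫ = ‖v‖ ^ 2 := by
    rw [← inner_sub_left, real_inner_self_eq_norm_sq]
  have hcoef : β⁻¹ - β / 2 * β⁻¹ ^ 2 = (2 * β)⁻¹ := by
    rcases eq_or_ne β 0 with rfl | hβ
    · simp
    · field_simp; ring
  rw [add_sub_cancel_left, real_inner_smul_right, norm_smul, mul_pow, Real.norm_eq_abs,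
    sq_abs] at h
  rw [inner_add_right, real_inner_smul_right, div_eq_mul_inv, ← hcoef]
  linear_combination h - β⁻¹ * hinner

theorem cocoercive_of_strongly_convex_of_smooth (hσ : 0 ≤ σ) (hβ : 0 < β)
    (hstrong : ∀ x y : H, f x ≥ f y + ⟪f' y, x - y⟫ + σ / 2 * ‖x - y‖ ^ 2)
    (hsmooth : ∀ x y : H, f x ≤ f y + ⟪f' y, x - y⟫ + β / 2 * ‖x - y‖ ^ 2) (x y : H) :
    ‖f' x - f' y‖ ^ 2 ≤ β * ⟪f' x - f' y, x - y⟫ := by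
  have gain (a b : H) : ⟪f' a, b⟫ - f b + ‖f' a - f' b‖ ^ 2 / (2 * β) ≤ ⟪f' a, a⟫ - f a := by
    have hstep := inner_sub_add_sq_div_le_of_smooth hsmooth (f' a) b
    have hmax := inner_sub_le_of_eq_grad hσ hstrong (rfl : f' a = f' a) (b + β⁻¹ • (f' a - f' b))
    linarith
  have hsum : ‖f' x - f' y‖ ^ 2 / β ≤ ⟪f' x - f' y, x - y⟫ := by
    have hx := gain x y
    have hy := gain y x
    rw [norm_sub_rev] at hy
    rw [inner_sub_left, inner_sub_right, inner_sub_right]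
    have : ‖f' x - f' y‖ ^ 2 / β = 2 * (‖f' x - f' y‖ ^ 2 / (2 * β)) := by field_simp
    linarith
  rwa [div_le_iff₀' hβ] at hsum

theorem eq_of_forall_inner_sub_le_of_eq_grad (hσ : 0 < σ)
    (hstrong : ∀ x y : H, f x ≥ f y + ⟪f' y, x - y⟫ + σ / 2 * ‖x - y‖ ^ 2)
    {c x₀ x : H} (hx₀ : f' x₀ = c) (hx : ∀ x', ⟪c, x'⟫ - f x' ≤ ⟪c, x⟫ - f x) : x = x₀ := by
  have h := inner_sub_add_sq_le_of_eq_grad hstrong hx₀ x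
  have hsq : σ / 2 * ‖x - x₀‖ ^ 2 ≤ 0 := by linarith [hx x₀]
  have hσ2 : 0 < σ / 2 := by positivity
  rw [← sub_eq_zero, ← norm_eq_zero, ← sq_eq_zero_iff]
  exact le_antisymm (nonpos_of_mul_nonpos_right hsq hσ2) (sq_nonneg _)

/-- `(1/β)`-strong convexity of the conjugate `f*(c) = ⟪c, x₀⟫ - f x₀`, whose gradient at `c` is
the maximiser `x₀`. -/
theorem inner_sub_add_inner_add_sq_div_le
    (hsmooth : ∀ x y : H, f x ≤ f y + ⟪f' y, x - y⟫ + β / 2 * ‖x - y‖ ^ 2)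
    {c c' x₀ x₁ : H} (hx₀ : f' x₀ = c) (hx₁ : ∀ x, ⟪c', x⟫ - f x ≤ ⟪c', x₁⟫ - f x₁) :
    ⟪c, x₀⟫ - f x₀ + ⟪c' - c, x₀⟫ + ‖c' - c‖ ^ 2 / (2 * β) ≤ ⟪c', x₁⟫ - f x₁ := by
  have hstep := inner_sub_add_sq_div_le_of_smooth hsmooth c' x₀
  rw [hx₀] at hstep
  rw [inner_sub_left]
  linarith [hx₁ (x₀ + β⁻¹ • (c' - c))]

end StronglyConvexSmooth

section MonotoneOperator

variable {H : Type*} [NormedAddCommGroup H] [InnerProductSpace ℝ H] {g : H → H} {σ β : ℝ}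

theorem lipschitzWith_sub_smul_sub (hβ : 0 < β)
    (hmono : ∀ x y, σ * ‖x - y‖ ^ 2 ≤ ⟪g x - g y, x - y⟫)
    (hcoco : ∀ x y, ‖g x - g y‖ ^ 2 ≤ β * ⟪g x - g y, x - y⟫) (c : H) :
    LipschitzWith (Real.toNNReal √(1 - σ / β)) (fun x => x - β⁻¹ • (g x - c)) := by
  refine LipschitzWith.of_dist_le' fun x y => ?_
  have hdiff : x - β⁻¹ • (g x - c) - (y - β⁻¹ • (g y - c)) = x - y - β⁻¹ • (g x - g y) := by
    simp only [smul_sub]; abel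
  have hsq : ‖x - y - β⁻¹ • (g x - g y)‖ ^ 2 ≤ (1 - σ / β) * ‖x - y‖ ^ 2 := by
    have hβinv : 0 < β⁻¹ := inv_pos.mpr hβ
    have hm := mul_le_mul_of_nonneg_left (hmono x y) hβinv.le
    have hc := mul_le_mul_of_nonneg_left (hcoco x y) (pow_pos hβinv 2).le
    have hββ : β⁻¹ ^ 2 * β = β⁻¹ := by field_simp
    rw [norm_sub_sq_real, real_inner_smul_right, norm_smul, mul_pow, Real.norm_eq_abs, sq_abs,
      real_inner_comm, div_eq_inv_mul]
    linear_combination hm + hc + ⟪g x - g y, x - y⟫ * hββ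
  rw [dist_eq_norm, dist_eq_norm, hdiff, ← Real.sqrt_sq (norm_nonneg _),
    ← Real.sqrt_sq (norm_nonneg (x - y)), ← Real.sqrt_mul' _ (sq_nonneg _)]
  exact Real.sqrt_le_sqrt hsq

theorem surjective_of_strongly_monotone_of_cocoercive [CompleteSpace H] (hσ : 0 < σ) (hβ : 0 < β)
    (hmono : ∀ x y, σ * ‖x - y‖ ^ 2 ≤ ⟪g x - g y, x - y⟫)
    (hcoco : ∀ x y, ‖g x - g y‖ ^ 2 ≤ β * ⟪g x - g y, x - y⟫) :
    Function.Surjective g := by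
  intro c
  have hK : Real.toNNReal √(1 - σ / β) < 1 := by
    rw [Real.toNNReal_lt_one, Real.sqrt_lt' one_pos]
    have := div_pos hσ hβ
    linarith
  have hT : ContractingWith _ (fun x => x - β⁻¹ • (g x - c)) :=
    ⟨hK, lipschitzWith_sub_smul_sub hβ hmono hcoco c⟩
  refine ⟨ContractingWith.fixedPoint _ hT, ?_⟩
  have hfix := hT.fixedPoint_isFixedPt
  rw [Function.IsFixedPt, sub_eq_self, smul_eq_zero, sub_eq_zero] at hfix
  exact hfix.resolve_left (inv_ne_zero hβ.ne')

end MonotoneOperator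

theorem dual_strongly_convex_general {H K : Type*}
    [NormedAddCommGroup H] [InnerProductSpace ℝ H] [CompleteSpace H]
    [NormedAddCommGroup K] [InnerProductSpace ℝ K] [CompleteSpace K]
    (σ β θ : ℝ) (hσ : 0 < σ) (hσβ : σ ≤ β) (hθ : 0 < θ)
    (f : H → ℝ) (f' : H → H)
    (hstrong : ∀ x y : H, f x ≥ f y + ⟪f' y, x - y⟫ + σ / 2 * ‖x - y‖ ^ 2)
    (hsmooth : ∀ x y : H, f x ≤ f y + ⟪f' y, x - y⟫ + β / 2 * ‖x - y‖ ^ 2)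
    (A : H →L[ℝ] K) (hA : ∀ μ : K, θ * ‖μ‖ ≤ ‖A.adjoint μ‖) :
    ∃ X : K → H,
      (∀ μ : K,
        (∀ x : H, ⟪-(A.adjoint μ), x⟫ - f x ≤ ⟪-(A.adjoint μ), X μ⟫ - f (X μ)) ∧
        (∀ x : H,
          (∀ x' : H, ⟪-(A.adjoint μ), x'⟫ - f x' ≤ ⟪-(A.adjoint μ), x⟫ - f x) → x = X μ)) ∧
      (∀ μ η : K,
        ⟪-(A.adjoint η), X η⟫ - f (X η) ≥
          (⟪-(A.adjoint μ), X μ⟫ - f (X μ)) + ⟪-(A (X μ)), η - μ⟫ +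
            θ ^ 2 / (2 * β) * ‖η - μ‖ ^ 2) := by
  have hβ : 0 < β := hσ.trans_le hσβ
  have hsurj := surjective_of_strongly_monotone_of_cocoercive hσ hβ
    (strongly_monotone_of_strongly_convex hstrong)
    (cocoercive_of_strongly_convex_of_smooth hσ.le hβ hstrong hsmooth)
  choose X hX using fun μ : K => hsurj (-(A.adjoint μ))
  have hmax (μ : K) := inner_sub_le_of_eq_grad hσ.le hstrong (hX μ)
  refine ⟨X, fun μ => ⟨hmax μ, fun x hx =>
    eq_of_forall_inner_sub_le_of_eq_grad hσ hstrong (hX μ) hx⟩, fun μ η => ?_⟩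
  have hdiff : -(A.adjoint η) - -(A.adjoint μ) = -(A.adjoint (η - μ)) := by
    rw [map_sub]; abel
  have hslope : ⟪-(A.adjoint (η - μ)), X μ⟫ = ⟪-(A (X μ)), η - μ⟫ := by
    rw [inner_neg_left, inner_neg_left, ContinuousLinearMap.adjoint_inner_left, real_inner_comm]
  have hgap : θ ^ 2 / (2 * β) * ‖η - μ‖ ^ 2 ≤ ‖-(A.adjoint (η - μ))‖ ^ 2 / (2 * β) := by
    rw [div_mul_eq_mul_div, norm_neg, ← mul_pow]
    gcongr
    exact hA _
  have key := inner_sub_add_inner_add_sq_div_le hsmooth (hX μ) (hmax η)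
  rw [hdiff, hslope] at key
  linarith

/-- If `f : H → ℝ` is σ-strongly convex and β-smooth (`0 < σ ≤ β`) with gradient `∇f`, and
`A : H →L K` is bounded linear with adjoint `A*` satisfying `‖A* μ‖ ≥ θ‖μ‖` for all `μ`
(`θ > 0`), then for every `μ` the function `x ↦ ⟪-A* μ, x⟫ - f x` attains its supremum at a
unique point `x_μ`, and the dual function `d(μ) = ⟪-A* μ, x_μ⟫ - f x_μ` is
`(θ²/β)`-strongly convex: `d η ≥ d μ + ⟪-A x_μ, η - μ⟫ + (θ²/(2β)) ‖η - μ‖²`. -/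
theorem dual_strongly_convex {H K : Type*}
    [NormedAddCommGroup H] [InnerProductSpace ℝ H] [CompleteSpace H]
    [NormedAddCommGroup K] [InnerProductSpace ℝ K] [CompleteSpace K]
    (σ β θ : ℝ) (hσ : 0 < σ) (hσβ : σ ≤ β) (hθ : 0 < θ)
    (f : H → ℝ) (f' : H → H) (hf : ∀ x, HasGradientAt f (f' x) x)
    (hstrong : ∀ x y : H, f x ≥ f y + ⟪f' y, x - y⟫ + σ / 2 * ‖x - y‖ ^ 2)
    (hsmooth : ∀ x y : H, f x ≤ f y + ⟪f' y, x - y⟫ + β / 2 * ‖x - y‖ ^ 2)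
    (A : H →L[ℝ] K) (hA : ∀ μ : K, θ * ‖μ‖ ≤ ‖A.adjoint μ‖) :
    ∃ X : K → H,
      (∀ μ : K,
        (∀ x : H, ⟪-(A.adjoint μ), x⟫ - f x ≤ ⟪-(A.adjoint μ), X μ⟫ - f (X μ)) ∧
        (∀ x : H,
          (∀ x' : H, ⟪-(A.adjoint μ), x'⟫ - f x' ≤ ⟪-(A.adjoint μ), x⟫ - f x) → x = X μ)) ∧
      (∀ μ η : K,
        ⟪-(A.adjoint η), X η⟫ - f (X η) ≥
          (⟪-(A.adjoint μ), X μ⟫ - f (X μ)) + ⟪-(A (X μ)), η - μ⟫ +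
            θ ^ 2 / (2 * β) * ‖η - μ‖ ^ 2) :=
  dual_strongly_convex_general σ β θ hσ hσβ hθ f f' hstrong hsmooth A hA
end
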